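/- arXiv:1712.08137 — 3 statements merged into one kernel-verified Lean document; each statement's English description precedes it below -/
import Mathlib

section
/- Let k̄ and l̄ be nonnegative integers and let k be an integer with −l̄ ≤ k ≤ k̄. Then q^{k̄,(n)}(k) ≤ q̃^{(n)}(2k̄ − k + 2) and q_{l̄}^{(n)}(k) ≤ q̃^{(n)}(2l̄ + k + 2). -/
open Finset

open scoped Classical

noncomputable section

namespace HScut

/-- Level of a jump path `s : Fin n → ℤ` at time `t` (sum of the first `t` jumps). -/
def levelAt (n : ℕ) (s : Fin n → ℤ) (t : ℕ) : ℤ :=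
  ∑ i ∈ Finset.univ.filter (fun i : Fin n => (i : ℕ) < t), s i

/-- Jump paths of length `n` with jumps of amplitude at most `m`. -/
def paths (n m : ℕ) : Finset (Fin n → ℤ) :=
  Fintype.piFinset fun _ => Finset.Icc (-(m : ℤ)) (m : ℤ)

/-- Weight `π(s) = ∏ q (s i)` of a jump path. -/
def pathWeight (n : ℕ) (q : ℤ → ℝ) (s : Fin n → ℤ) : ℝ :=
  ∏ i, q (s i)

/-- Modified weight `π̃(s)`, where each `q (±i)` (`i ≠ 0`) is replaced by `max (q i) (q (-i))`
(which equals `w_i / n`). -/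
def modWeight (n : ℕ) (q : ℤ → ℝ) (s : Fin n → ℤ) : ℝ :=
  ∏ i, (if s i = 0 then q 0 else max (q (s i)) (q (-s i)))

/-- `q^{(n)}(k)`: probability of a net balance of `k` cumulative jumps at maturity. -/
def qfull (n m : ℕ) (q : ℤ → ℝ) (k : ℤ) : ℝ :=
  ∑ s ∈ (paths n m).filter (fun s => levelAt n s n = k), pathWeight n q s

/-- `q̃^{(n)}(k)`: enlarged probability of a net balance of `k` cumulative jumps at maturity. -/
def qtilde (n m : ℕ) (q : ℤ → ℝ) (k : ℤ) : ℝ :=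
  ∑ s ∈ (paths n m).filter (fun s => levelAt n s n = k), modWeight n q s

/-- `q^{k̄,(n)}(k)`: probability of a net balance of `k` jumps at maturity while reaching at
some time a net balance higher than `k̄`. -/
def qup (n m : ℕ) (q : ℤ → ℝ) (kbar : ℕ) (k : ℤ) : ℝ :=
  ∑ s ∈ (paths n m).filter
      (fun s => levelAt n s n = k ∧ ∃ t ≤ n, (kbar : ℤ) + 1 ≤ levelAt n s t),
    pathWeight n q s

/-- `q_{l̄}^{(n)}(k)`: probability of a net balance of `k` jumps at maturity while reaching at
some time a net balance lower than `-l̄`. -/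
def qdown (n m : ℕ) (q : ℤ → ℝ) (lbar : ℕ) (k : ℤ) : ℝ :=
  ∑ s ∈ (paths n m).filter
      (fun s => levelAt n s n = k ∧ ∃ t ≤ n, levelAt n s t ≤ -(lbar : ℤ) - 1),
    pathWeight n q s

/-- `q^{cut,(n)}(k)`: probability of reaching level `k` at maturity without ever leaving the
band `[-l̄, k̄]`. -/
def qcut (n m : ℕ) (q : ℤ → ℝ) (kbar lbar : ℕ) (k : ℤ) : ℝ :=
  ∑ s ∈ (paths n m).filter
      (fun s => levelAt n s n = k ∧
        ∀ t ≤ n, -(lbar : ℤ) ≤ levelAt n s t ∧ levelAt n s t ≤ (kbar : ℤ)),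
    pathWeight n q s

/-- `P(j) = C(n,j) p^j (1-p)^(n-j)`. -/
def binomP (n : ℕ) (p : ℝ) (j : ℕ) : ℝ :=
  (n.choose j : ℝ) * p ^ j * (1 - p) ^ (n - j)

/-- Put payoff at the terminal node `(n, j, k)`. -/
def putPayoff (n : ℕ) (S0 K σ dt h : ℝ) (j : ℕ) (k : ℤ) : ℝ :=
  max (K - S0 * Real.exp ((2 * (j : ℝ) - (n : ℝ)) * (σ * Real.sqrt dt) + h * (k : ℝ))) 0

/-- European put value `V` on the full tree. -/
def Vput (n m : ℕ) (q : ℤ → ℝ) (p S0 K σ τ h r : ℝ) : ℝ :=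
  Real.exp (-(r * τ)) *
    ∑ k ∈ Finset.Icc (-((m : ℤ) * n)) ((m : ℤ) * n), ∑ j ∈ Finset.range (n + 1),
      putPayoff n S0 K σ (τ / n) h j k * binomP n p j * qfull n m q k

/-- European put value `V^{TT}` on the truncated tree. -/
def VTT (n m : ℕ) (q : ℤ → ℝ) (p S0 K σ τ h r : ℝ) (kbar lbar : ℕ) : ℝ :=
  Real.exp (-(r * τ)) *
    ∑ k ∈ Finset.Icc (-(lbar : ℤ)) (kbar : ℤ), ∑ j ∈ Finset.range (n + 1),
      putPayoff n S0 K σ (τ / n) h j k * binomP n p j * qcut n m q kbar lbar k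

/-- The sequence `W_i`: `W₁ = w₁`, `W_{i+1} = w_{i+1} + W_i^{(i+1)/i}` (real powers). -/
def Wseq (w : ℕ → ℝ) : ℕ → ℝ
  | 0 => 0
  | 1 => w 1
  | (i + 2) => w (i + 2) + Wseq w (i + 1) ^ (((i : ℝ) + 2) / ((i : ℝ) + 1))

/-- `M_i = max { W_i, W_i^{(1-i)/i} }` (real powers). -/
def Mseq (w : ℕ → ℝ) (i : ℕ) : ℝ :=
  max (Wseq w i) (Wseq w i ^ ((1 - (i : ℝ)) / (i : ℝ)))

/-- `G = 2 m max{W_m, 1} e^{W_m} ∏_{i=1}^{m-1} M_i²`. -/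
def Gconst (w : ℕ → ℝ) (m : ℕ) : ℝ :=
  2 * m * max (Wseq w m) 1 * Real.exp (Wseq w m) * ∏ i ∈ Finset.Icc 1 (m - 1), (Mseq w i) ^ 2

/-- Value of the underlying at a node with (real) time index `i`, `j` up Brownian moves and
net jump level `l`. -/
def Sval (S0 σ dt h : ℝ) (i : ℝ) (j : ℕ) (l : ℤ) : ℝ :=
  S0 * Real.exp ((2 * (j : ℝ) - i) * (σ * Real.sqrt dt) + (l : ℝ) * h)

/-- Full backward European put price; `VEfull … d j l` is the value `V_E(n-d, j, l)`
(`d` = number of remaining steps). -/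
def VEfull (n m : ℕ) (q : ℤ → ℝ) (p dt S0 K σ h r : ℝ) : ℕ → ℕ → ℤ → ℝ
  | 0, j, l => max (K - Sval S0 σ dt h (n : ℝ) j l) 0
  | (d + 1), j, l =>
      Real.exp (-(r * dt)) *
        ∑ k ∈ Finset.Icc (-(m : ℤ)) (m : ℤ),
          (VEfull n m q p dt S0 K σ h r d (j + 1) (l + k) * p +
            VEfull n m q p dt S0 K σ h r d j (l + k) * (1 - p)) * q k

/-- Full backward American put price; `VAfull … d j l` is the value `V_A(n-d, j, l)`. -/
def VAfull (n m : ℕ) (q : ℤ → ℝ) (p dt S0 K σ h r : ℝ) : ℕ → ℕ → ℤ → ℝ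
  | 0, j, l => max (K - Sval S0 σ dt h (n : ℝ) j l) 0
  | (d + 1), j, l =>
      max
        (Real.exp (-(r * dt)) *
          ∑ k ∈ Finset.Icc (-(m : ℤ)) (m : ℤ),
            (VAfull n m q p dt S0 K σ h r d (j + 1) (l + k) * p +
              VAfull n m q p dt S0 K σ h r d j (l + k) * (1 - p)) * q k)
        (K - Sval S0 σ dt h ((n : ℝ) - (d + 1)) j l)

/-- Truncated backward European put price with boundary value `b`;
`VEtr … d j l` is the value `V_E^b(n-d, j, l)`. -/
def VEtr (n m : ℕ) (q : ℤ → ℝ) (p dt S0 K σ h r b : ℝ) (kbar lbar : ℕ) :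
    ℕ → ℕ → ℤ → ℝ
  | 0, j, l =>
      if -(lbar : ℤ) ≤ l ∧ l ≤ (kbar : ℤ) then max (K - Sval S0 σ dt h (n : ℝ) j l) 0 else b
  | (d + 1), j, l =>
      if -(lbar : ℤ) ≤ l ∧ l ≤ (kbar : ℤ) then
        Real.exp (-(r * dt)) *
          ∑ k ∈ Finset.Icc (-(m : ℤ)) (m : ℤ),
            (VEtr n m q p dt S0 K σ h r b kbar lbar d (j + 1) (l + k) * p +
              VEtr n m q p dt S0 K σ h r b kbar lbar d j (l + k) * (1 - p)) * q k
      else b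

/-- Truncated backward American put price with boundary value `b`;
`VAtr … d j l` is the value `V_A^b(n-d, j, l)`. -/
def VAtr (n m : ℕ) (q : ℤ → ℝ) (p dt S0 K σ h r b : ℝ) (kbar lbar : ℕ) :
    ℕ → ℕ → ℤ → ℝ
  | 0, j, l =>
      if -(lbar : ℤ) ≤ l ∧ l ≤ (kbar : ℤ) then max (K - Sval S0 σ dt h (n : ℝ) j l) 0 else b
  | (d + 1), j, l =>
      if -(lbar : ℤ) ≤ l ∧ l ≤ (kbar : ℤ) then
        max
          (Real.exp (-(r * dt)) *
            ∑ k ∈ Finset.Icc (-(m : ℤ)) (m : ℤ),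
              (VAtr n m q p dt S0 K σ h r b kbar lbar d (j + 1) (l + k) * p +
                VAtr n m q p dt S0 K σ h r b kbar lbar d j (l + k) * (1 - p)) * q k)
          (K - Sval S0 σ dt h ((n : ℝ) - (d + 1)) j l)
      else b

/-- The sum, over all jump-path prefixes that first exit the band `[-l̄, k̄]` at some time
`1 ≤ i ≤ n`, of the prefix probability times `b e^{-r i Δt}`. -/
def exitSum (n m : ℕ) (q : ℤ → ℝ) (r dt : ℝ) (kbar lbar : ℕ) (b : ℝ) : ℝ :=
  ∑ i ∈ Finset.Icc 1 n,
    ∑ y ∈ (paths i m).filter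
        (fun y =>
          (∀ t < i, -(lbar : ℤ) ≤ levelAt i y t ∧ levelAt i y t ≤ (kbar : ℤ)) ∧
          ¬(-(lbar : ℤ) ≤ levelAt i y i ∧ levelAt i y i ≤ (kbar : ℤ))),
      pathWeight i q y * (b * Real.exp (-(r * (i : ℝ) * dt)))

end HScut

open HScut

/-!
A path with jumps in `{-1, 0, 1}` that ends at `k` and rises above `k̄` reaches `c = k̄ + 1`
exactly at its first hitting time `T`. Flipping the signs of all jumps after `T` gives a path
ending at `2c - k`, and this reflection is an involution on paths that hit `c`. It leaves the
modified weight unchanged, since `π̃` sees only the absolute values of the jumps, while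
`π ≤ π̃` jumpwise; hence `q^{k̄,(n)}(k) ≤ q̃^{(n)}(2k̄ - k + 2)`. The downward bound is the
upward one for the mirrored paths and the mirrored jump law `j ↦ q (-j)`, under which `q̃` is
unchanged.
-/

namespace HScut

variable {n : ℕ}

lemma levelAt_zero (s : Fin n → ℤ) : levelAt n s 0 = 0 := by
  simp [levelAt]

lemma levelAt_succ (s : Fin n → ℤ) {t : ℕ} (ht : t < n) :
    levelAt n s (t + 1) = levelAt n s t + s ⟨t, ht⟩ := by
  have hfilter : (univ.filter fun i : Fin n => (i : ℕ) < t + 1)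
      = insert ⟨t, ht⟩ (univ.filter fun i : Fin n => (i : ℕ) < t) := by
    ext i
    simp only [mem_filter, mem_insert, mem_univ, true_and, Fin.ext_iff]
    omega
  rw [levelAt, hfilter, sum_insert (by simp), add_comm]
  rfl

lemma levelAt_congr {s r : Fin n → ℤ} {t : ℕ} (h : ∀ i : Fin n, (i : ℕ) < t → s i = r i) :
    levelAt n s t = levelAt n r t :=
  sum_congr rfl fun i hi => h i (mem_filter.1 hi).2

lemma levelAt_self (s : Fin n → ℤ) : levelAt n s n = ∑ i, s i := by
  rw [levelAt, filter_true_of_mem fun i _ => i.isLt]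

lemma levelAt_neg (s : Fin n → ℤ) (t : ℕ) : levelAt n (-s) t = -levelAt n s t :=
  sum_neg_distrib _

section SignFlip

variable {m : ℕ} {r s : Fin n → ℤ}

lemma mem_paths_of_forall_eq_or_eq_neg (h : ∀ i, r i = s i ∨ r i = -s i)
    (hs : s ∈ paths n m) : r ∈ paths n m := by
  simp only [paths, Fintype.mem_piFinset, mem_Icc] at hs ⊢
  intro i
  rcases h i with h | h <;> rw [h] <;> constructor <;> linarith [hs i]

lemma modWeight_of_forall_eq_or_eq_neg (q : ℤ → ℝ) (h : ∀ i, r i = s i ∨ r i = -s i) :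
    modWeight n q r = modWeight n q s := by
  refine prod_congr rfl fun i _ => ?_
  rcases h i with h | h
  · rw [h]
  · simp [h, max_comm]

end SignFlip

section Weight

variable {q : ℤ → ℝ} {s : Fin n → ℤ}

lemma pathWeight_le_modWeight (hq : ∀ i, 0 ≤ q (s i)) : pathWeight n q s ≤ modWeight n q s := by
  refine prod_le_prod (fun i _ => hq i) fun i _ => ?_
  split_ifs with h
  · rw [h]
  · exact le_max_left _ _

lemma modWeight_nonneg (hq : ∀ i, 0 ≤ q (s i)) : 0 ≤ modWeight n q s :=
  (prod_nonneg fun i _ => hq i).trans (pathWeight_le_modWeight hq)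

lemma jumpWeight_nonneg_of_mem_paths_one (hqm : 0 ≤ q (-1)) (hq0 : 0 ≤ q 0) (hqp : 0 ≤ q 1)
    (hs : s ∈ paths n 1) (i : Fin n) : 0 ≤ q (s i) := by
  simp only [paths, Fintype.mem_piFinset, mem_Icc, Nat.cast_one] at hs
  obtain ⟨h₁, h₂⟩ := hs i
  obtain h | h | h : s i = -1 ∨ s i = 0 ∨ s i = 1 := by omega
  all_goals rwa [h]

end Weight

/-- Junk value `0` when `c` is never reached. -/
def hitTime (c : ℤ) (s : Fin n → ℤ) : ℕ :=
  sInf {t | c ≤ levelAt n s t}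

def reflectAfterHit (c : ℤ) (s : Fin n → ℤ) : Fin n → ℤ :=
  fun i => if (i : ℕ) < hitTime c s then s i else -s i

section Reflection

variable {c : ℤ} {s : Fin n → ℤ}

lemma le_levelAt_hitTime (hc : ∃ t, c ≤ levelAt n s t) : c ≤ levelAt n s (hitTime c s) :=
  Nat.sInf_mem hc

lemma hitTime_le {t : ℕ} (ht : c ≤ levelAt n s t) : hitTime c s ≤ t :=
  Nat.sInf_le ht

lemma levelAt_lt_of_lt_hitTime {t : ℕ} (ht : t < hitTime c s) : levelAt n s t < c :=
  lt_of_not_ge fun h => (hitTime_le h).not_gt ht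

lemma reflectAfterHit_eq_or_eq_neg (c : ℤ) (s : Fin n → ℤ) (i : Fin n) :
    reflectAfterHit c s i = s i ∨ reflectAfterHit c s i = -s i := by
  unfold reflectAfterHit
  split_ifs <;> simp

lemma levelAt_hitTime (hc : 1 ≤ c) (hs : s ∈ paths n 1) (t : ℕ) (htn : t ≤ n)
    (ht : c ≤ levelAt n s t) : levelAt n s (hitTime c s) = c := by
  have hT : c ≤ levelAt n s (hitTime c s) := le_levelAt_hitTime ⟨t, ht⟩
  obtain ⟨T, hT_eq⟩ : ∃ T, hitTime c s = T + 1 := by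
    refine Nat.exists_eq_add_one.2 (Nat.pos_of_ne_zero fun h0 => ?_)
    rw [h0, levelAt_zero] at hT
    omega
  have hTn : T < n := by have := hitTime_le ht; omega
  have hbefore : levelAt n s T < c := levelAt_lt_of_lt_hitTime (by omega)
  have hjump : s ⟨T, hTn⟩ ≤ 1 := by
    simp only [paths, Fintype.mem_piFinset, mem_Icc] at hs
    exact_mod_cast (hs _).2
  rw [hT_eq, levelAt_succ s hTn] at hT ⊢
  omega

lemma levelAt_reflectAfterHit_of_le_hitTime {t : ℕ} (ht : t ≤ hitTime c s) :
    levelAt n (reflectAfterHit c s) t = levelAt n s t :=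
  levelAt_congr fun i hi => if_pos (by omega)

lemma hitTime_reflectAfterHit (hc : ∃ t, c ≤ levelAt n s t) :
    hitTime c (reflectAfterHit c s) = hitTime c s := by
  have hhit : c ≤ levelAt n (reflectAfterHit c s) (hitTime c s) :=
    (levelAt_reflectAfterHit_of_le_hitTime le_rfl).symm ▸ le_levelAt_hitTime hc
  refine le_antisymm (hitTime_le hhit) (le_of_not_gt fun hlt => ?_)
  have hhit' := le_levelAt_hitTime ⟨_, hhit⟩
  rw [levelAt_reflectAfterHit_of_le_hitTime hlt.le] at hhit'
  exact (levelAt_lt_of_lt_hitTime hlt).not_ge hhit'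

lemma reflectAfterHit_reflectAfterHit (hc : ∃ t, c ≤ levelAt n s t) :
    reflectAfterHit c (reflectAfterHit c s) = s := by
  funext i
  simp only [reflectAfterHit, hitTime_reflectAfterHit hc]
  split_ifs <;> simp

lemma levelAt_reflectAfterHit (c : ℤ) (s : Fin n → ℤ) :
    levelAt n (reflectAfterHit c s) n = 2 * levelAt n s (hitTime c s) - levelAt n s n := by
  set T := hitTime c s
  have hsplit := fun f : Fin n → ℤ =>
    sum_filter_add_sum_filter_not univ (fun i : Fin n => (i : ℕ) < T) f
  have hbefore : ∑ i ∈ univ.filter (fun i : Fin n => (i : ℕ) < T), reflectAfterHit c s i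
      = levelAt n s T :=
    sum_congr rfl fun i hi => if_pos (mem_filter.1 hi).2
  have hafter : ∑ i ∈ univ.filter (fun i : Fin n => ¬(i : ℕ) < T), reflectAfterHit c s i
      = -∑ i ∈ univ.filter (fun i : Fin n => ¬(i : ℕ) < T), s i := by
    rw [← sum_neg_distrib]
    exact sum_congr rfl fun i hi => if_neg (mem_filter.1 hi).2
  rw [levelAt_self, levelAt_self, ← hsplit, ← hsplit s, hbefore, hafter]
  unfold levelAt
  ring

end Reflection

lemma qup_le_qtilde (q : ℤ → ℝ) (hqm : 0 ≤ q (-1)) (hq0 : 0 ≤ q 0) (hqp : 0 ≤ q 1)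
    (kbar : ℕ) (k : ℤ) : qup n 1 q kbar k ≤ qtilde n 1 q (2 * (kbar : ℤ) - k + 2) := by
  set c : ℤ := kbar + 1
  set A := (paths n 1).filter fun s => levelAt n s n = k ∧ ∃ t ≤ n, c ≤ levelAt n s t
  have hnonneg := fun {s} (hs : s ∈ paths n 1) => jumpWeight_nonneg_of_mem_paths_one hqm hq0 hqp hs
  have hinj : Set.InjOn (reflectAfterHit c) (A : Set (Fin n → ℤ)) := by
    intro s₁ h₁ s₂ h₂ heq
    obtain ⟨-, -, t₁, -, ht₁⟩ := mem_filter.1 h₁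
    obtain ⟨-, -, t₂, -, ht₂⟩ := mem_filter.1 h₂
    rw [← reflectAfterHit_reflectAfterHit ⟨t₁, ht₁⟩, heq,
      reflectAfterHit_reflectAfterHit ⟨t₂, ht₂⟩]
  have hmaps : A.image (reflectAfterHit c) ⊆
      (paths n 1).filter fun s => levelAt n s n = 2 * (kbar : ℤ) - k + 2 := by
    intro r hr
    obtain ⟨s, hsA, rfl⟩ := mem_image.1 hr
    obtain ⟨hs, hk, t, htn, ht⟩ := mem_filter.1 hsA
    refine mem_filter.2
      ⟨mem_paths_of_forall_eq_or_eq_neg (reflectAfterHit_eq_or_eq_neg c s) hs, ?_⟩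
    rw [levelAt_reflectAfterHit, levelAt_hitTime (by omega) hs t htn ht, hk]
    ring
  calc qup n 1 q kbar k ≤ ∑ s ∈ A, modWeight n q s :=
        sum_le_sum fun s hs => pathWeight_le_modWeight (hnonneg (mem_filter.1 hs).1)
    _ = ∑ s ∈ A, modWeight n q (reflectAfterHit c s) :=
        sum_congr rfl fun s _ =>
          (modWeight_of_forall_eq_or_eq_neg q (reflectAfterHit_eq_or_eq_neg c s)).symm
    _ = ∑ s ∈ A.image (reflectAfterHit c), modWeight n q s := (sum_image hinj).symm
    _ ≤ qtilde n 1 q (2 * (kbar : ℤ) - k + 2) :=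
        sum_le_sum_of_subset_of_nonneg hmaps fun s hs _ =>
          modWeight_nonneg (hnonneg (mem_filter.1 hs).1)

lemma qdown_eq_qup_neg (m : ℕ) (q : ℤ → ℝ) (lbar : ℕ) (k : ℤ) :
    qdown n m q lbar k = qup n m (fun j => q (-j)) lbar (-k) := by
  have hneg_paths : ∀ s : Fin n → ℤ, s ∈ paths n m → -s ∈ paths n m := fun s =>
    mem_paths_of_forall_eq_or_eq_neg fun i => Or.inr rfl
  refine sum_equiv (Equiv.neg _) (fun s => ?_) fun s _ => by simp [pathWeight]
  simp only [mem_filter, Equiv.neg_apply, levelAt_neg]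
  refine and_congr ⟨hneg_paths s, fun h => neg_neg s ▸ hneg_paths _ h⟩ ?_
  refine and_congr neg_inj.symm (exists_congr fun t => and_congr_right fun _ => ?_)
  omega

lemma qtilde_neg (m : ℕ) (q : ℤ → ℝ) (k : ℤ) :
    qtilde n m (fun j => q (-j)) k = qtilde n m q k :=
  sum_congr rfl fun s _ => prod_congr rfl fun i _ => by
    split_ifs with h
    · rfl
    · simp only [neg_neg, max_comm]

end HScut

theorem reflection_bound_one_general (n : ℕ) (q : ℤ → ℝ)
    (hqm : 0 ≤ q (-1)) (hq0 : 0 ≤ q 0) (hqp : 0 ≤ q 1)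
    (kbar lbar : ℕ) (k : ℤ) :
    qup n 1 q kbar k ≤ qtilde n 1 q (2 * (kbar : ℤ) - k + 2) ∧
    qdown n 1 q lbar k ≤ qtilde n 1 q (2 * (lbar : ℤ) + k + 2) := by
  refine ⟨qup_le_qtilde q hqm hq0 hqp kbar k, ?_⟩
  calc qdown n 1 q lbar k = qup n 1 (fun j => q (-j)) lbar (-k) := qdown_eq_qup_neg 1 q lbar k
    _ ≤ qtilde n 1 (fun j => q (-j)) (2 * (lbar : ℤ) - -k + 2) :=
        qup_le_qtilde _ (by simpa using hqp) (by simpa using hq0) (by simpa using hqm) lbar (-k)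
    _ = qtilde n 1 q (2 * (lbar : ℤ) + k + 2) := by rw [qtilde_neg, sub_neg_eq_add]

/-- Reflection bound (m = 1): `q^{k̄,(n)}(k) ≤ q̃^{(n)}(2k̄ − k + 2)` and
`q_{l̄}^{(n)}(k) ≤ q̃^{(n)}(2l̄ + k + 2)` for all `−l̄ ≤ k ≤ k̄`. -/
theorem reflection_bound_one (n : ℕ) (hn : 1 ≤ n) (q : ℤ → ℝ)
    (hqm : 0 ≤ q (-1)) (hq0 : 0 ≤ q 0) (hqp : 0 ≤ q 1)
    (hsum : q (-1) + q 0 + q 1 = 1)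
    (kbar lbar : ℕ) (k : ℤ) (hkl : -(lbar : ℤ) ≤ k) (hkk : k ≤ (kbar : ℤ)) :
    qup n 1 q kbar k ≤ qtilde n 1 q (2 * (kbar : ℤ) - k + 2) ∧
    qdown n 1 q lbar k ≤ qtilde n 1 q (2 * (lbar : ℤ) + k + 2) :=
  reflection_bound_one_general n q hqm hq0 hqp kbar lbar k
end
end

section
/- For every integer k with 2w − 1 ≤ k ≤ n one has q̃^{(n)}(k) ≤ 2·e^{w}·w^{k}/k!. -/
open Finset

open scoped Classical

noncomputable section

open HScut

/-!
Write `r = max (q 1) (q (-1))`, so that `w = n r`. A path of `paths n 1` ending at level `k` with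
`b` down-steps has `k + b` up-steps, so its modified weight is at most `r ^ (k + 2 b)`, and there
are at most `C(n, k + b) C(n, b)` such paths. Since `C(n, a) r ^ a ≤ w ^ a / a!`, the paths with
`b` down-steps contribute at most `w ^ (k + b) / (k + b)! · w ^ b / b!`. For `2w ≤ k + 1` we have
`(k + b)! ≥ k! (k + 1) ^ b ≥ k! (2w) ^ b`, so this is at most `2⁻ᵇ · w ^ k / k! · e ^ w`, and the
geometric series gives the factor `2`.
-/

section

open Nat Real

lemma choose_mul_pow_le_pow_div_factorial (n a : ℕ) {x : ℝ} (hx : 0 ≤ x) :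
    n.choose a * x ^ a ≤ (n * x) ^ a / a ! := by
  rw [mul_pow, mul_div_right_comm]
  exact mul_le_mul_of_nonneg_right (Nat.choose_le_pow_div a n) (by positivity)

lemma pow_div_factorial_add_le {w : ℝ} (hw : 0 ≤ w) {k : ℕ} (hk : 2 * w ≤ k + 1) (b : ℕ) :
    w ^ (k + b) / (k + b)! ≤ (1 / 2) ^ b * (w ^ k / k !) := by
  have hfact : k ! * (2 * w) ^ b ≤ (k + b)! := calc
    k ! * (2 * w) ^ b ≤ k ! * ((k + 1 : ℕ) : ℝ) ^ b := by gcongr; push_cast; exact hk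
    _ ≤ (k + b)! := by exact_mod_cast factorial_mul_pow_le_factorial
  rw [div_le_iff₀ (by positivity)]
  calc w ^ (k + b) = (1 / 2) ^ b * (w ^ k / k !) * (k ! * (2 * w) ^ b) := by
        rw [pow_add, mul_pow, one_div, inv_pow]
        field_simp
    _ ≤ (1 / 2) ^ b * (w ^ k / k !) * (k + b)! := by gcongr

lemma choose_mul_choose_mul_pow_le (n : ℕ) {r : ℝ} (hr : 0 ≤ r) {k : ℕ}
    (hk : 2 * (n * r) ≤ k + 1) (b : ℕ) :
    ((n.choose (k + b) * n.choose b : ℕ) : ℝ) * r ^ (k + 2 * b) ≤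
      (1 / 2) ^ b * ((n * r) ^ k / k ! * exp (n * r)) := by
  calc _ = (n.choose (k + b) * r ^ (k + b)) * (n.choose b * r ^ b) := by push_cast; ring
    _ ≤ ((n * r) ^ (k + b) / (k + b)!) * ((n * r) ^ b / b !) := by
        gcongr
        exacts [choose_mul_pow_le_pow_div_factorial n _ hr,
          choose_mul_pow_le_pow_div_factorial n b hr]
    _ ≤ ((1 / 2) ^ b * ((n * r) ^ k / k !)) * exp (n * r) := by
        gcongr
        exacts [pow_div_factorial_add_le (by positivity) hk b,
          Real.pow_div_factorial_le_exp _ (by positivity) b]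
    _ = _ := by ring

end

namespace HScut

variable {n : ℕ}

def upSteps (s : Fin n → ℤ) : Finset (Fin n) := univ.filter (s · = 1)

def downSteps (s : Fin n → ℤ) : Finset (Fin n) := univ.filter (s · = -1)

lemma eq_neg_one_or_zero_or_one_of_mem_paths_one {s : Fin n → ℤ} (hs : s ∈ paths n 1)
    (i : Fin n) : s i = -1 ∨ s i = 0 ∨ s i = 1 := by
  have := Fintype.mem_piFinset.mp hs i
  rw [mem_Icc] at this
  omega

lemma sum_eq_card_upSteps_sub_card_downSteps {s : Fin n → ℤ} (hs : s ∈ paths n 1) :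
    ∑ i, s i = #(upSteps s) - #(downSteps s) := by
  have hsplit (i : Fin n) : s i = (if s i = 1 then 1 else 0) - (if s i = -1 then 1 else 0) := by
    rcases eq_neg_one_or_zero_or_one_of_mem_paths_one hs i with h | h | h <;> simp [h]
  rw [sum_congr rfl fun i _ => hsplit i, sum_sub_distrib, sum_boole, sum_boole]
  rfl

lemma card_filter_ne_zero {s : Fin n → ℤ} (hs : s ∈ paths n 1) :
    #{i | s i ≠ 0} = #(upSteps s) + #(downSteps s) := by
  rw [← card_union_of_disjoint]
  · congr 1
    ext i
    simp only [upSteps, downSteps, mem_filter, mem_union, mem_univ, true_and]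
    rcases eq_neg_one_or_zero_or_one_of_mem_paths_one hs i with h | h | h <;> simp [h]
  · exact disjoint_filter.mpr fun i _ h => by omega

lemma modWeight_le_pow {q : ℤ → ℝ} (hq0 : 0 ≤ q 0) (hq01 : q 0 ≤ 1)
    (hr : 0 ≤ max (q 1) (q (-1))) {s : Fin n → ℤ} (hs : s ∈ paths n 1) :
    modWeight n q s ≤ max (q 1) (q (-1)) ^ #{i | s i ≠ 0} := by
  calc modWeight n q s ≤ ∏ i, if s i = 0 then 1 else max (q 1) (q (-1)) := by
        refine prod_le_prod (fun i _ => ?_) (fun i _ => ?_) <;>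
          rcases eq_neg_one_or_zero_or_one_of_mem_paths_one hs i with h | h | h <;>
          simp [h, max_comm, hq0, hq01, hr]
    _ = _ := by rw [prod_ite, prod_const_one, one_mul, prod_const]

lemma injOn_upSteps_downSteps :
    Set.InjOn (fun s : Fin n → ℤ => (upSteps s, downSteps s)) (paths n 1) := by
  intro s hs t ht hst
  simp only [Prod.mk.injEq, Finset.ext_iff, upSteps, downSteps, mem_filter, mem_univ,
    true_and] at hst
  funext i
  have := eq_neg_one_or_zero_or_one_of_mem_paths_one hs i
  have := eq_neg_one_or_zero_or_one_of_mem_paths_one ht i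
  have := hst.1 i
  have := hst.2 i
  omega

lemma card_filter_paths_le (k b : ℕ) :
    #{s ∈ paths n 1 | levelAt n s n = k ∧ #(downSteps s) = b} ≤ n.choose (k + b) * n.choose b := by
  calc _ ≤ #(powersetCard (k + b) univ ×ˢ powersetCard b (univ : Finset (Fin n))) := by
        refine card_le_card_of_injOn _ (fun s hs => ?_)
          (injOn_upSteps_downSteps.mono fun s hs => (mem_filter.mp hs).1)
        obtain ⟨hs, hk, hb⟩ := mem_filter.mp hs
        rw [levelAt_self, sum_eq_card_upSteps_sub_card_downSteps hs] at hk
        simp only [mem_coe, mem_product, mem_powersetCard_univ]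
        omega
    _ = n.choose (k + b) * n.choose b := by
        simp only [card_product, card_powersetCard, card_univ, Fintype.card_fin]

lemma qtilde_le_sum_choose_mul_choose {q : ℤ → ℝ} (hq0 : 0 ≤ q 0) (hq01 : q 0 ≤ 1)
    (hr : 0 ≤ max (q 1) (q (-1))) (k : ℕ) :
    qtilde n 1 q k ≤ ∑ b ∈ range (n + 1),
      ((n.choose (k + b) * n.choose b : ℕ) : ℝ) * max (q 1) (q (-1)) ^ (k + 2 * b) := by
  set r := max (q 1) (q (-1))
  set P := {s ∈ paths n 1 | levelAt n s n = k}
  have hmaps : ∀ s ∈ P, #(downSteps s) ∈ range (n + 1) := fun s _ =>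
    mem_range_succ_iff.mpr ((card_le_univ _).trans_eq (Fintype.card_fin n))
  calc qtilde n 1 q k ≤ ∑ s ∈ P, r ^ (k + 2 * #(downSteps s)) := by
        refine sum_le_sum fun s hs => ?_
        obtain ⟨hs, hk⟩ := mem_filter.mp hs
        rw [levelAt_self, sum_eq_card_upSteps_sub_card_downSteps hs] at hk
        have hjumps : #{i | s i ≠ 0} = k + 2 * #(downSteps s) := by
          rw [card_filter_ne_zero hs]; omega
        exact hjumps ▸ modWeight_le_pow hq0 hq01 hr hs
    _ = ∑ b ∈ range (n + 1), (#{s ∈ P | #(downSteps s) = b} : ℝ) * r ^ (k + 2 * b) := by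
        rw [← sum_fiberwise_of_maps_to hmaps]
        refine sum_congr rfl fun b _ => ?_
        rw [sum_congr rfl fun s hs => by rw [(mem_filter.mp hs).2], sum_const, nsmul_eq_mul]
    _ ≤ _ := by
        refine sum_le_sum fun b _ => mul_le_mul_of_nonneg_right ?_ (pow_nonneg hr _)
        rw [filter_filter]
        exact_mod_cast card_filter_paths_le k b

end HScut

theorem qtilde_pointwise_bound_general (n : ℕ) (q : ℤ → ℝ)
    (hqm : 0 ≤ q (-1)) (hq0 : 0 ≤ q 0) (hqp : 0 ≤ q 1)
    (hsum : q (-1) + q 0 + q 1 = 1)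
    (w : ℝ) (hw : w = (n : ℝ) * max (q 1) (q (-1)))
    (k : ℕ) (hk1 : 2 * w - 1 ≤ (k : ℝ)) :
    qtilde n 1 q (k : ℤ) ≤ 2 * Real.exp w * w ^ k / (Nat.factorial k : ℝ) := by
  set r := max (q 1) (q (-1))
  have hr : 0 ≤ r := le_max_of_le_left hqp
  subst hw
  calc qtilde n 1 q k
      ≤ ∑ b ∈ range (n + 1), ((n.choose (k + b) * n.choose b : ℕ) : ℝ) * r ^ (k + 2 * b) :=
        qtilde_le_sum_choose_mul_choose hq0 (by linarith) hr k
    _ ≤ ∑ b ∈ range (n + 1), (1 / 2 : ℝ) ^ b * ((n * r) ^ k / k.factorial * Real.exp (n * r)) :=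
        sum_le_sum fun b _ => choose_mul_choose_mul_pow_le n hr (by linarith) b
    _ ≤ 2 * ((n * r) ^ k / k.factorial * Real.exp (n * r)) := by
        rw [← sum_mul]
        exact mul_le_mul_of_nonneg_right (sum_geometric_two_le _) (by positivity)
    _ = _ := by ring

/-- For every integer `k` with `2w − 1 ≤ k ≤ n` one has `q̃^{(n)}(k) ≤ 2 e^w w^k / k!`. -/
theorem qtilde_pointwise_bound (n : ℕ) (hn : 1 ≤ n) (q : ℤ → ℝ)
    (hqm : 0 ≤ q (-1)) (hq0 : 0 ≤ q 0) (hqp : 0 ≤ q 1)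
    (hsum : q (-1) + q 0 + q 1 = 1)
    (w : ℝ) (hw : w = (n : ℝ) * max (q 1) (q (-1)))
    (k : ℕ) (hk1 : 2 * w - 1 ≤ (k : ℝ)) (hk2 : k ≤ n) :
    qtilde n 1 q (k : ℤ) ≤ 2 * Real.exp w * w ^ k / (Nat.factorial k : ℝ) :=
  qtilde_pointwise_bound_general n q hqm hq0 hqp hsum w hw k hk1
end
end

section
/- Let ε > 0 and let k̄ = l̄ be a nonnegative integer with k̄ ≥ max{ −ln ε + c , 2w − 2 }, where c := w(e+1) − rτ − 1 + ln(4K) + ln(2+w). Then the European put values on the full and on the truncated tree satisfy V − V^{TT} < ε. -/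
open Finset

open scoped Classical

noncomputable section

namespace HScut

/-! `V − V^{TT}` is the discounted average payoff over the jump paths that leave the band
`[-k̄, k̄]`, and the payoff never exceeds `K`. A path leaving the band has at least `k̄ + 1` jumps
of one sign; since the weights of the free jumps sum to one, the paths taking the value `v` on a
fixed set of `a` positions weigh `q_v ^ a`, so the exiting weight is at most
`C(n, k̄+1) (q₁^(k̄+1) + q₋₁^(k̄+1)) ≤ 2 w^(k̄+1) / (k̄+1)! ≤ 2 e^(w e − k̄ − 1)`.
The hypothesis on `k̄` makes `2 K e^(−rτ) e^(w e − k̄ − 1)` smaller than `ε`. -/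

section Payoff

variable {n : ℕ} {p S0 K σ dt h : ℝ}

lemma sum_binomP (n : ℕ) (p : ℝ) : ∑ j ∈ range (n + 1), binomP n p j = 1 := by
  have h := add_pow p (1 - p) n
  rw [add_sub_cancel, one_pow] at h
  rw [h]
  exact sum_congr rfl fun j _ => by unfold binomP; ring

lemma binomP_nonneg (hp0 : 0 ≤ p) (hp1 : p ≤ 1) (j : ℕ) : 0 ≤ binomP n p j := by
  have : 0 ≤ 1 - p := sub_nonneg.mpr hp1
  unfold binomP
  positivity

lemma putPayoff_le (hS0 : 0 ≤ S0) (hK : 0 ≤ K) (j : ℕ) (k : ℤ) :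
    putPayoff n S0 K σ dt h j k ≤ K :=
  max_le (sub_le_self K (by positivity)) hK

def meanPutPayoff (n : ℕ) (p S0 K σ dt h : ℝ) (k : ℤ) : ℝ :=
  ∑ j ∈ range (n + 1), putPayoff n S0 K σ dt h j k * binomP n p j

lemma meanPutPayoff_le (hS0 : 0 ≤ S0) (hK : 0 ≤ K) (hp0 : 0 ≤ p) (hp1 : p ≤ 1) (k : ℤ) :
    meanPutPayoff n p S0 K σ dt h k ≤ K :=
  calc meanPutPayoff n p S0 K σ dt h k ≤ ∑ j ∈ range (n + 1), K * binomP n p j :=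
        sum_le_sum fun j _ =>
          mul_le_mul_of_nonneg_right (putPayoff_le hS0 hK j k) (binomP_nonneg hp0 hp1 j)
    _ = K := by rw [← mul_sum, sum_binomP, mul_one]

end Payoff

section Paths

variable {n m : ℕ} {q : ℤ → ℝ}

lemma mem_paths_iff {s : Fin n → ℤ} : s ∈ paths n m ↔ ∀ i, -(m : ℤ) ≤ s i ∧ s i ≤ m := by
  simp [paths]

lemma pathWeight_nonneg (hq : ∀ x ∈ Icc (-(m : ℤ)) m, 0 ≤ q x) {s : Fin n → ℤ}
    (hs : s ∈ paths n m) : 0 ≤ pathWeight n q s :=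
  prod_nonneg fun i _ => hq _ (Fintype.mem_piFinset.mp hs i)

lemma abs_levelAt_le {s : Fin n → ℤ} (hs : s ∈ paths n m) (t : ℕ) :
    |levelAt n s t| ≤ m * n :=
  calc |levelAt n s t| ≤ ∑ i ∈ univ.filter (fun i : Fin n => (i : ℕ) < t), |s i| :=
        abs_sum_le_sum_abs _ _
    _ ≤ ∑ i, |s i| :=
        sum_le_sum_of_subset_of_nonneg (filter_subset _ _) fun _ _ _ => abs_nonneg _
    _ ≤ ∑ _i : Fin n, (m : ℤ) := sum_le_sum fun i _ => abs_le.mpr (mem_paths_iff.mp hs i)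
    _ = m * n := by simp [mul_comm]

def StaysIn (n kbar lbar : ℕ) (s : Fin n → ℤ) : Prop :=
  ∀ t ≤ n, -(lbar : ℤ) ≤ levelAt n s t ∧ levelAt n s t ≤ (kbar : ℤ)

end Paths

section Decomposition

variable {n m : ℕ} {q : ℤ → ℝ} {p S0 K σ τ h r : ℝ}

lemma sum_mul_sum_filter_levelAt_eq {S : Finset (Fin n → ℤ)} {I : Finset ℤ}
    (hS : ∀ s ∈ S, levelAt n s n ∈ I) (f : ℤ → ℝ) :
    ∑ k ∈ I, f k * ∑ s ∈ S.filter (fun s => levelAt n s n = k), pathWeight n q s =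
      ∑ s ∈ S, pathWeight n q s * f (levelAt n s n) := by
  rw [← sum_fiberwise_of_maps_to hS]
  refine sum_congr rfl fun k _ => ?_
  rw [mul_sum]
  refine sum_congr rfl fun s hs => ?_
  rw [(mem_filter.mp hs).2, mul_comm]

lemma Vput_eq_sum_paths :
    Vput n m q p S0 K σ τ h r = Real.exp (-(r * τ)) *
      ∑ s ∈ paths n m, pathWeight n q s * meanPutPayoff n p S0 K σ (τ / n) h (levelAt n s n) := by
  rw [Vput, ← sum_mul_sum_filter_levelAt_eq
    fun s hs => mem_Icc.mpr (abs_le.mp (abs_levelAt_le hs n))]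
  simp only [← sum_mul]
  rfl

lemma VTT_eq_sum_paths (kbar lbar : ℕ) :
    VTT n m q p S0 K σ τ h r kbar lbar = Real.exp (-(r * τ)) *
      ∑ s ∈ (paths n m).filter (StaysIn n kbar lbar),
        pathWeight n q s * meanPutPayoff n p S0 K σ (τ / n) h (levelAt n s n) := by
  rw [VTT, ← sum_mul_sum_filter_levelAt_eq (S := (paths n m).filter (StaysIn n kbar lbar))
    fun s hs => mem_Icc.mpr ((mem_filter.mp hs).2 n le_rfl)]
  simp only [← sum_mul, filter_filter]
  refine congrArg _ (sum_congr rfl fun k _ => congrArg _ (sum_congr ?_ fun _ _ => rfl))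
  ext s
  simp [StaysIn, and_comm, and_left_comm]

lemma Vput_sub_VTT_eq (kbar lbar : ℕ) :
    Vput n m q p S0 K σ τ h r - VTT n m q p S0 K σ τ h r kbar lbar = Real.exp (-(r * τ)) *
      ∑ s ∈ (paths n m).filter (fun s => ¬StaysIn n kbar lbar s),
        pathWeight n q s * meanPutPayoff n p S0 K σ (τ / n) h (levelAt n s n) := by
  rw [Vput_eq_sum_paths, VTT_eq_sum_paths, ← mul_sub, ← sum_filter_add_sum_filter_not _
    (StaysIn n kbar lbar), add_sub_cancel_left]

lemma Vput_sub_VTT_le (hq : ∀ x ∈ Icc (-(m : ℤ)) m, 0 ≤ q x) (hS0 : 0 ≤ S0) (hK : 0 ≤ K)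
    (hp0 : 0 ≤ p) (hp1 : p ≤ 1) (kbar lbar : ℕ) :
    Vput n m q p S0 K σ τ h r - VTT n m q p S0 K σ τ h r kbar lbar ≤ Real.exp (-(r * τ)) *
      (K * ∑ s ∈ (paths n m).filter (fun s => ¬StaysIn n kbar lbar s), pathWeight n q s) := by
  rw [Vput_sub_VTT_eq]
  refine mul_le_mul_of_nonneg_left ?_ (Real.exp_pos _).le
  rw [mul_sum]
  refine sum_le_sum fun s hs => ?_
  rw [mul_comm K]
  exact mul_le_mul_of_nonneg_left (meanPutPayoff_le hS0 hK hp0 hp1 _)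
    (pathWeight_nonneg hq (mem_filter.mp hs).1)

end Decomposition

section PathWeights

variable {n m : ℕ} {q : ℤ → ℝ}

lemma sum_pathWeight_filter_forall_eq (hsum : ∑ x ∈ Icc (-(m : ℤ)) m, q x = 1) {v : ℤ}
    (hv : v ∈ Icc (-(m : ℤ)) m) (A : Finset (Fin n)) :
    ∑ s ∈ (paths n m).filter (fun s => ∀ i ∈ A, s i = v), pathWeight n q s = q v ^ #A := by
  have hfilter : (paths n m).filter (fun s => ∀ i ∈ A, s i = v) =
      Fintype.piFinset fun i => if i ∈ A then {v} else Icc (-(m : ℤ)) m := by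
    ext s
    simp only [mem_filter, paths, Fintype.mem_piFinset]
    constructor
    · rintro ⟨hs, hA⟩ i
      split_ifs with hi
      · exact mem_singleton.mpr (hA i hi)
      · exact hs i
    · intro hs
      refine ⟨fun i => ?_, fun i hi => by simpa [hi] using hs i⟩
      have hsi := hs i
      split_ifs at hsi
      · rwa [mem_singleton.mp hsi]
      · exact hsi
  rw [hfilter]
  unfold pathWeight
  rw [← prod_univ_sum]
  simp only [apply_ite (fun t : Finset ℤ => ∑ x ∈ t, q x), sum_singleton, hsum, prod_ite_mem,
    univ_inter, prod_const]

lemma sum_pathWeight_filter_card_le (hq : ∀ x ∈ Icc (-(m : ℤ)) m, 0 ≤ q x)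
    (hsum : ∑ x ∈ Icc (-(m : ℤ)) m, q x = 1) {v : ℤ} (hv : v ∈ Icc (-(m : ℤ)) m) (a : ℕ) :
    ∑ s ∈ (paths n m).filter (fun s => a ≤ #(univ.filter fun i => s i = v)), pathWeight n q s ≤
      n.choose a * q v ^ a := by
  have hterm : ∀ s ∈ paths n m, ∀ A : Finset (Fin n),
      0 ≤ if ∀ i ∈ A, s i = v then pathWeight n q s else 0 := fun s hs A => by
    split_ifs
    exacts [pathWeight_nonneg hq hs, le_rfl]
  calc ∑ s ∈ (paths n m).filter (fun s => a ≤ #(univ.filter fun i => s i = v)), pathWeight n q s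
      ≤ ∑ s ∈ (paths n m).filter (fun s => a ≤ #(univ.filter fun i => s i = v)),
          ∑ A ∈ powersetCard a univ, if ∀ i ∈ A, s i = v then pathWeight n q s else 0 := by
        refine sum_le_sum fun s hs => ?_
        obtain ⟨hs, hcard⟩ := mem_filter.mp hs
        obtain ⟨A, hAv, hAcard⟩ := exists_subset_card_eq hcard
        have hA : ∀ i ∈ A, s i = v := fun i hi => (mem_filter.mp (hAv hi)).2
        refine (if_pos hA).symm.le.trans (single_le_sum (fun B _ => hterm s hs B)
          (mem_powersetCard.mpr ⟨subset_univ A, hAcard⟩))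
    _ ≤ ∑ s ∈ paths n m,
          ∑ A ∈ powersetCard a univ, if ∀ i ∈ A, s i = v then pathWeight n q s else 0 :=
        sum_le_sum_of_subset_of_nonneg (filter_subset _ _)
          fun s hs _ => sum_nonneg fun A _ => hterm s hs A
    _ = ∑ A ∈ powersetCard a (univ : Finset (Fin n)),
          ∑ s ∈ (paths n m).filter (fun s => ∀ i ∈ A, s i = v), pathWeight n q s := by
        rw [sum_comm]
        simp only [sum_filter]
    _ = ∑ _A ∈ powersetCard a (univ : Finset (Fin n)), q v ^ a :=
        sum_congr rfl fun A hA => by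
          rw [sum_pathWeight_filter_forall_eq hsum hv, (mem_powersetCard.mp hA).2]
    _ = n.choose a * q v ^ a := by simp

lemma levelAt_le_card_filter_eq_one {s : Fin n → ℤ} (hs : s ∈ paths n 1) (t : ℕ) :
    levelAt n s t ≤ #(univ.filter fun i => s i = 1) :=
  calc levelAt n s t
      ≤ ∑ i ∈ univ.filter (fun i : Fin n => (i : ℕ) < t), if s i = 1 then (1 : ℤ) else 0 :=
        sum_le_sum fun i _ => by have := mem_paths_iff.mp hs i; split_ifs <;> omega
    _ ≤ ∑ i, if s i = 1 then (1 : ℤ) else 0 :=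
        sum_le_sum_of_subset_of_nonneg (filter_subset _ _) fun _ _ _ => by split_ifs <;> simp
    _ = #(univ.filter fun i => s i = 1) := by rw [natCast_card_filter]

lemma neg_card_filter_eq_neg_one_le_levelAt {s : Fin n → ℤ} (hs : s ∈ paths n 1) (t : ℕ) :
    -(#(univ.filter fun i => s i = -1) : ℤ) ≤ levelAt n s t :=
  calc -(#(univ.filter fun i => s i = -1) : ℤ) = -∑ i, if s i = -1 then (1 : ℤ) else 0 := by
        rw [natCast_card_filter]
    _ ≤ -∑ i ∈ univ.filter (fun i : Fin n => (i : ℕ) < t), if s i = -1 then (1 : ℤ) else 0 :=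
        neg_le_neg <| sum_le_sum_of_subset_of_nonneg (filter_subset _ _)
          fun _ _ _ => by split_ifs <;> simp
    _ ≤ levelAt n s t := by
        rw [← sum_neg_distrib]
        exact sum_le_sum fun i _ => by have := mem_paths_iff.mp hs i; split_ifs <;> omega

lemma card_filter_le_of_not_staysIn {kbar lbar : ℕ} {s : Fin n → ℤ} (hs : s ∈ paths n 1)
    (hexit : ¬StaysIn n kbar lbar s) :
    kbar + 1 ≤ #(univ.filter fun i => s i = 1) ∨ lbar + 1 ≤ #(univ.filter fun i => s i = -1) := by
  simp only [StaysIn, not_forall, not_and_or, not_le] at hexit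
  obtain ⟨t, -, hexit⟩ := hexit
  have hup := levelAt_le_card_filter_eq_one hs t
  have hdown := neg_card_filter_eq_neg_one_le_levelAt hs t
  omega

lemma sum_pathWeight_filter_not_staysIn_le (hq : ∀ x ∈ Icc (-1 : ℤ) 1, 0 ≤ q x)
    (hsum : ∑ x ∈ Icc (-1 : ℤ) 1, q x = 1) (kbar lbar : ℕ) :
    ∑ s ∈ (paths n 1).filter (fun s => ¬StaysIn n kbar lbar s), pathWeight n q s ≤
      n.choose (kbar + 1) * q 1 ^ (kbar + 1) + n.choose (lbar + 1) * q (-1) ^ (lbar + 1) := by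
  set up := (paths n 1).filter fun s => kbar + 1 ≤ #(univ.filter fun i => s i = 1)
  set down := (paths n 1).filter fun s => lbar + 1 ≤ #(univ.filter fun i => s i = -1)
  have hnonneg : ∀ s ∈ up ∪ down, 0 ≤ pathWeight n q s := fun s hs =>
    pathWeight_nonneg hq (by rcases mem_union.mp hs with hs | hs <;> exact (mem_filter.mp hs).1)
  have hexit : (paths n 1).filter (fun s => ¬StaysIn n kbar lbar s) ⊆ up ∪ down := fun s hs => by
    obtain ⟨hs, hexit⟩ := mem_filter.mp hs
    rcases card_filter_le_of_not_staysIn hs hexit with h | h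
    exacts [mem_union_left _ (mem_filter.mpr ⟨hs, h⟩), mem_union_right _ (mem_filter.mpr ⟨hs, h⟩)]
  have hinter : 0 ≤ ∑ s ∈ up ∩ down, pathWeight n q s :=
    sum_nonneg fun s hs => hnonneg s (inter_subset_union hs)
  calc _ ≤ ∑ s ∈ up ∪ down, pathWeight n q s :=
        sum_le_sum_of_subset_of_nonneg hexit fun s hs _ => hnonneg s hs
    _ ≤ ∑ s ∈ up, pathWeight n q s + ∑ s ∈ down, pathWeight n q s := by
        linarith [sum_union_inter (s₁ := up) (s₂ := down) (f := pathWeight n q)]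
    _ ≤ _ := add_le_add (sum_pathWeight_filter_card_le hq hsum (by decide) _)
        (sum_pathWeight_filter_card_le hq hsum (by decide) _)

end PathWeights

lemma choose_mul_pow_le_exp {n : ℕ} {x w : ℝ} (hx : 0 ≤ x) (hxw : n * x ≤ w) (a : ℕ) :
    n.choose a * x ^ a ≤ Real.exp (w * Real.exp 1 - a) := by
  have hw : 0 ≤ w := (by positivity : 0 ≤ (n : ℝ) * x).trans hxw
  calc (n.choose a : ℝ) * x ^ a ≤ n ^ a / a.factorial * x ^ a :=
        mul_le_mul_of_nonneg_right (Nat.choose_le_pow_div a n) (by positivity)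
    _ = (n * x) ^ a / a.factorial := by rw [mul_pow]; ring
    _ ≤ w ^ a / a.factorial := by gcongr
    _ = (w * Real.exp 1) ^ a / a.factorial * Real.exp (-a) := by
        rw [mul_pow, ← Real.exp_nat_mul, Real.exp_neg]
        field_simp
    _ ≤ Real.exp (w * Real.exp 1) * Real.exp (-a) := by
        gcongr
        exact Real.pow_div_factorial_le_exp _ (by positivity) a
    _ = Real.exp (w * Real.exp 1 - a) := by rw [← Real.exp_add, sub_eq_add_neg]

lemma discounted_exit_bound_lt {w K r τ ε : ℝ} {kbar : ℕ} (hw : 0 ≤ w) (hK : 0 < K) (hε : 0 < ε)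
    (hkbar : -Real.log ε + (w * (Real.exp 1 + 1) - r * τ - 1 + Real.log (4 * K) +
      Real.log (2 + w)) ≤ kbar) :
    Real.exp (-(r * τ)) * (K * (2 * Real.exp (w * Real.exp 1 - (kbar + 1)))) < ε := by
  have hlog : Real.log (2 * K) + w * Real.exp 1 - r * τ - (kbar + 1) < Real.log ε := by
    have h4K : Real.log (4 * K) = Real.log 2 + Real.log (2 * K) := by
      rw [← Real.log_mul two_ne_zero (by positivity)]; ring_nf
    have h2w : Real.log 2 ≤ Real.log (2 + w) := Real.log_le_log two_pos (by linarith)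
    linarith [Real.log_pos one_lt_two]
  calc Real.exp (-(r * τ)) * (K * (2 * Real.exp (w * Real.exp 1 - (kbar + 1))))
      = Real.exp (Real.log (2 * K) + w * Real.exp 1 - r * τ - (kbar + 1)) := by
        rw [show Real.log (2 * K) + w * Real.exp 1 - r * τ - (kbar + 1) =
          Real.log (2 * K) + (w * Real.exp 1 - (kbar + 1)) + -(r * τ) by ring,
          Real.exp_add, Real.exp_add, Real.exp_log (by positivity)]
        ring
    _ < ε := by rwa [← Real.exp_log hε, Real.exp_lt_exp]

end HScut

open HScut

theorem put_truncation_error_one_general (n : ℕ) (q : ℤ → ℝ)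
    (hqm : 0 ≤ q (-1)) (hq0 : 0 ≤ q 0) (hqp : 0 ≤ q 1)
    (hsum : q (-1) + q 0 + q 1 = 1)
    (w : ℝ) (hw : w = (n : ℝ) * max (q 1) (q (-1)))
    (S0 K σ τ h r p : ℝ) (hS0 : 0 < S0) (hK : 0 < K)
    (hp0 : 0 ≤ p) (hp1 : p ≤ 1)
    (ε : ℝ) (hε : 0 < ε) (kbar : ℕ)
    (hkbar : max
        (-Real.log ε + (w * (Real.exp 1 + 1) - r * τ - 1 + Real.log (4 * K) + Real.log (2 + w)))
        (2 * w - 2) ≤ (kbar : ℝ)) :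
    Vput n 1 q p S0 K σ τ h r - VTT n 1 q p S0 K σ τ h r kbar kbar < ε := by
  have hIcc : Icc (-1 : ℤ) 1 = {-1, 0, 1} := by decide
  have hq : ∀ x ∈ Icc (-1 : ℤ) 1, 0 ≤ q x := by simp [hIcc, hqm, hq0, hqp]
  have hqsum : ∑ x ∈ Icc (-1 : ℤ) 1, q x = 1 := by simp [hIcc, ← hsum, add_assoc]
  have hjump : ∀ x, 0 ≤ q x → q x ≤ max (q 1) (q (-1)) →
      n.choose (kbar + 1) * q x ^ (kbar + 1) ≤ Real.exp (w * Real.exp 1 - (kbar + 1)) :=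
    fun x hx0 hx => by
      simpa using choose_mul_pow_le_exp hx0 (hw ▸ mul_le_mul_of_nonneg_left hx n.cast_nonneg)
        (kbar + 1)
  have hw0 : 0 ≤ w := hw ▸ mul_nonneg n.cast_nonneg (hqp.trans (le_max_left _ _))
  calc Vput n 1 q p S0 K σ τ h r - VTT n 1 q p S0 K σ τ h r kbar kbar
      ≤ Real.exp (-(r * τ)) * (K * ∑ s ∈ (paths n 1).filter (fun s => ¬StaysIn n kbar kbar s),
          pathWeight n q s) := Vput_sub_VTT_le hq hS0.le hK.le hp0 hp1 kbar kbar
    _ ≤ Real.exp (-(r * τ)) * (K * (2 * Real.exp (w * Real.exp 1 - (kbar + 1)))) := by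
        gcongr
        linarith [sum_pathWeight_filter_not_staysIn_le hq hqsum kbar kbar (n := n),
          hjump 1 hqp (le_max_left _ _), hjump (-1) hqm (le_max_right _ _)]
    _ < ε := discounted_exit_bound_lt hw0 hK hε (le_of_max_le_left hkbar)

/-- Theorem (European put, m = 1): if `k̄ = l̄ ≥ max{−ln ε + c, 2w − 2}` with
`c = w(e+1) − rτ − 1 + ln(4K) + ln(2+w)`, then `V − V^{TT} < ε`. -/
theorem put_truncation_error_one (n : ℕ) (hn : 1 ≤ n) (q : ℤ → ℝ)
    (hqm : 0 ≤ q (-1)) (hq0 : 0 ≤ q 0) (hqp : 0 ≤ q 1)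
    (hsum : q (-1) + q 0 + q 1 = 1)
    (w : ℝ) (hw : w = (n : ℝ) * max (q 1) (q (-1)))
    (S0 K σ τ h r p : ℝ) (hS0 : 0 < S0) (hK : 0 < K) (hh : 0 < h) (hτ : 0 < τ)
    (hp0 : 0 ≤ p) (hp1 : p ≤ 1)
    (ε : ℝ) (hε : 0 < ε) (kbar : ℕ)
    (hkbar : max
        (-Real.log ε + (w * (Real.exp 1 + 1) - r * τ - 1 + Real.log (4 * K) + Real.log (2 + w)))
        (2 * w - 2) ≤ (kbar : ℝ)) :
    Vput n 1 q p S0 K σ τ h r - VTT n 1 q p S0 K σ τ h r kbar kbar < ε :=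
  put_truncation_error_one_general n q hqm hq0 hqp hsum w hw S0 K σ τ h r p hS0 hK hp0 hp1 ε hε kbar
    hkbar
end
end
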